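/- arXiv:2302.06987 — 3 statements merged into one kernel-verified Lean document; each statement's English description precedes it below -/
import Mathlib

section
/- Let a₁, ..., aₙ be positive reals, let U' > 0 and V ≤ 0 be reals, and let θ₁, ..., θₙ ∈ [0,1] with Σᵢ θᵢ = 1. If a₁U' + V > 0 and a₁ ≤ a₂ ≤ ... ≤ aₙ, then Σᵢ arctan(aᵢU' + θᵢV) ≥ arctan(a₁U' + V) + Σ_{i≥2} arctan(aᵢU'). -/
/-!
`arctan` is concave on `[0, ∞)`. For a concave function, the drop `f x - f (x + c)` over a
step `c ≤ 0` can only grow when the step is moved to the left, and shrinking the step by a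
factor `t ∈ [0, 1]` shrinks the drop by at least that factor. Hence the drop of the `i`-th term,
`arctan (aᵢU') - arctan (aᵢU' + θᵢV)`, is at most `θᵢ (arctan (a₁U') - arctan (a₁U' + V))`, and
summing over `i` with `∑ θᵢ = 1` gives the claim.
-/

open Real Set

lemma Real.concaveOn_arctan_Ici : ConcaveOn ℝ (Ici 0) arctan := by
  refine AntitoneOn.concaveOn_of_deriv (convex_Ici 0) continuous_arctan.continuousOn
    differentiable_arctan.differentiableOn ?_
  rw [deriv_arctan, interior_Ici]
  intro x (hx : 0 < x) y _ hxy
  dsimp only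
  gcongr

section Concave

variable {s : Set ℝ} {f : ℝ → ℝ}

lemma ConcaveOn.sub_map_add_le_sub_map_add (hf : ConcaveOn ℝ s f) {x y c : ℝ}
    (hyc : y + c ∈ s) (hx : x ∈ s) (hc : c ≤ 0) (hyx : y ≤ x) :
    f x - f (x + c) ≤ f y - f (y + c) := by
  rcases (add_le_of_nonpos_right hc).trans hyx |>.eq_or_lt with hdegenerate | hlt
  · have hy : y = x := by linarith
    have hc0 : c = 0 := by linarith
    simp [hy, hc0]
  -- `y` and `x + c` are the convex combinations of `y + c` and `x` with swapped weights.
  set d := x - y - c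
  have hd : 0 < d := by simp only [d]; linarith
  have hcomb (u v : ℝ) (hu : 0 ≤ u) (hv : 0 ≤ v) (huv : u + v = d) :
      u / d * f (y + c) + v / d * f x ≤ f (u / d * (y + c) + v / d * x) :=
    hf.2 hyc hx (by positivity) (by positivity) (by field_simp; linarith)
  have hleft := hcomb (x - y) (-c) (by linarith) (by linarith) (by simp only [d]; ring)
  have hright := hcomb (-c) (x - y) (by linarith) (by linarith) (by simp only [d]; ring)
  have hy : (x - y) / d * (y + c) + -c / d * x = y := by field_simp; ring
  have hxc : -c / d * (y + c) + (x - y) / d * x = x + c := by field_simp; ring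
  rw [hy] at hleft
  rw [hxc] at hright
  have hsum : (x - y) / d + -c / d = 1 := by field_simp; simp only [d]; ring
  linear_combination hleft + hright - (f (y + c) + f x) * hsum

lemma ConcaveOn.sub_map_add_mul_le (hf : ConcaveOn ℝ s f) {x y w t : ℝ}
    (hyw : y + w ∈ s) (hx : x ∈ s) (hw : w ≤ 0) (hyx : y ≤ x) (ht₀ : 0 ≤ t) (ht₁ : t ≤ 1) :
    f x - f (x + t * w) ≤ t * (f y - f (y + w)) := by
  have hs := hf.1.ordConnected
  have hy : y ∈ s := hs.out hyw hx ⟨by linarith, hyx⟩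
  have hytw : y + t * w ∈ s := hs.out hyw hx ⟨by nlinarith, by nlinarith⟩
  have hshift := hf.sub_map_add_le_sub_map_add hytw hx (mul_nonpos_of_nonneg_of_nonpos ht₀ hw) hyx
  have hchord := hf.2 hyw hy ht₀ (sub_nonneg.mpr ht₁) (add_sub_cancel t 1)
  have hpt : t • (y + w) + (1 - t) • y = y + t * w := by simp only [smul_eq_mul]; ring
  rw [hpt, smul_eq_mul, smul_eq_mul] at hchord
  linarith

end Concave

theorem stmt_2_general (n : ℕ) (hn : 0 < n) (a θ : Fin n → ℝ) (U' V : ℝ)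
    (hmono : ∀ i j : Fin n, i ≤ j → a i ≤ a j)
    (hU' : 0 < U') (hV : V ≤ 0)
    (hθ : ∀ i, θ i ∈ Set.Icc (0 : ℝ) 1) (hθsum : ∑ i, θ i = 1)
    (hpos : 0 < a ⟨0, hn⟩ * U' + V) :
    Real.arctan (a ⟨0, hn⟩ * U' + V)
        + ∑ i ∈ Finset.univ.erase ⟨0, hn⟩, Real.arctan (a i * U')
      ≤ ∑ i, Real.arctan (a i * U' + θ i * V) := by
  set z : Fin n := ⟨0, hn⟩
  have hdrop (i : Fin n) :
      arctan (a i * U') - arctan (a i * U' + θ i * V) ≤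
        θ i * (arctan (a z * U') - arctan (a z * U' + V)) := by
    have hzi : a z * U' ≤ a i * U' := by
      gcongr
      exact hmono z i (Fin.mk_le_of_le_val (Nat.zero_le _))
    exact concaveOn_arctan_Ici.sub_map_add_mul_le hpos.le (hpos.le.trans (by linarith)) hV hzi
      (hθ i).1 (hθ i).2
  have hsum := Finset.sum_le_sum fun i (_ : i ∈ Finset.univ) => hdrop i
  rw [Finset.sum_sub_distrib, ← Finset.sum_mul, hθsum, one_mul,
    ← Finset.add_sum_erase _ _ (Finset.mem_univ z)] at hsum
  linarith

theorem stmt_2 (n : ℕ) (hn : 0 < n) (a θ : Fin n → ℝ) (U' V : ℝ)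
    (ha : ∀ i, 0 < a i) (hmono : ∀ i j : Fin n, i ≤ j → a i ≤ a j)
    (hU' : 0 < U') (hV : V ≤ 0)
    (hθ : ∀ i, θ i ∈ Set.Icc (0 : ℝ) 1) (hθsum : ∑ i, θ i = 1)
    (hpos : 0 < a ⟨0, hn⟩ * U' + V) :
    Real.arctan (a ⟨0, hn⟩ * U' + V)
        + ∑ i ∈ Finset.univ.erase ⟨0, hn⟩, Real.arctan (a i * U')
      ≤ ∑ i, Real.arctan (a i * U' + θ i * V) :=
  stmt_2_general n hn a θ U' V hmono hU' hV hθ hθsum hpos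
end

section
/- Let n ≥ 3, 0 < β ≤ 2, c, c' > 0, and let φ : (1, ∞) → ℝ be a nonnegative differentiable function with φ(t) → 0 as t → ∞, satisfying φ'(t) = −n·φ(t) + H₁(t) + H₂(t) for t > 1, where c·e^{−βt} ≤ H₁(t) ≤ c'·e^{−βt} and |H₂(t)| ≤ K·φ(t)² for some K > 0. Then there exist C₁, C₂, T > 0 such that C₁·e^{−βt} ≤ φ(t) ≤ C₂·e^{−βt} for all t > T. -/
lemma stmt7_antitone {A : ℝ} {ψ ψ' : ℝ → ℝ}
    (hd : ∀ t ∈ Set.Ici A, HasDerivAt ψ (ψ' t) t)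
    (hn : ∀ t ∈ Set.Ioi A, ψ' t ≤ 0) :
    AntitoneOn ψ (Set.Ici A) := by
  apply antitoneOn_of_deriv_nonpos (convex_Ici A)
      (fun t ht => (hd t ht).continuousAt.continuousWithinAt)
  · intro t ht
    rw [interior_Ici] at ht
    exact (hd t (Set.mem_Ici.2 (le_of_lt ht))).differentiableAt.differentiableWithinAt
  · intro t ht
    rw [interior_Ici] at ht
    rw [(hd t (Set.mem_Ici.2 (le_of_lt ht))).deriv]
    exact hn t ht

lemma stmt7_monotone {A : ℝ} {ψ ψ' : ℝ → ℝ}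
    (hd : ∀ t ∈ Set.Ici A, HasDerivAt ψ (ψ' t) t)
    (hn : ∀ t ∈ Set.Ioi A, 0 ≤ ψ' t) :
    MonotoneOn ψ (Set.Ici A) := by
  apply monotoneOn_of_deriv_nonneg (convex_Ici A)
      (fun t ht => (hd t ht).continuousAt.continuousWithinAt)
  · intro t ht
    rw [interior_Ici] at ht
    exact (hd t (Set.mem_Ici.2 (le_of_lt ht))).differentiableAt.differentiableWithinAt
  · intro t ht
    rw [interior_Ici] at ht
    rw [(hd t (Set.mem_Ici.2 (le_of_lt ht))).deriv]
    exact hn t ht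

lemma stmt7_deriv (m q β : ℝ) {φ : ℝ → ℝ} {d t : ℝ}
    (hφ : HasDerivAt φ d t) :
    HasDerivAt (fun s => Real.exp (m*s) * φ s - q * Real.exp ((m-β)*s))
      (Real.exp (m*t) * (m * φ t + d) - q * ((m-β) * Real.exp ((m-β)*t))) t := by
  have h1 : HasDerivAt (fun s : ℝ => Real.exp (m*s)) (Real.exp (m*t) * m) t := by
    simpa using ((hasDerivAt_id t).const_mul m).exp
  have h2 : HasDerivAt (fun s : ℝ => Real.exp ((m-β)*s)) (Real.exp ((m-β)*t) * (m-β)) t := by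
    simpa using ((hasDerivAt_id t).const_mul (m-β)).exp
  have := (h1.mul hφ).sub (h2.const_mul q)
  refine this.congr_deriv ?_
  ring

lemma stmt7_expmul (x y z : ℝ) (h : x + y = z) :
    Real.exp x * Real.exp y = Real.exp z := by
  rw [← Real.exp_add, h]

set_option maxHeartbeats 1600000 in
theorem stmt_7 (n : ℕ) (hn : 3 ≤ n) (β c c' K : ℝ)
    (hβ0 : 0 < β) (hβ2 : β ≤ 2) (hc : 0 < c) (hc' : 0 < c') (hK : 0 < K)
    (φ H₁ H₂ : ℝ → ℝ)
    (hφnonneg : ∀ t, 1 < t → 0 ≤ φ t)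
    (hφlim : Filter.Tendsto φ Filter.atTop (nhds 0))
    (hφderiv : ∀ t, 1 < t → HasDerivAt φ (-(n : ℝ) * φ t + H₁ t + H₂ t) t)
    (hH₁l : ∀ t, 1 < t → c * Real.exp (-β * t) ≤ H₁ t)
    (hH₁u : ∀ t, 1 < t → H₁ t ≤ c' * Real.exp (-β * t))
    (hH₂ : ∀ t, 1 < t → |H₂ t| ≤ K * (φ t) ^ 2) :
    ∃ C₁ C₂ T : ℝ, 0 < C₁ ∧ 0 < C₂ ∧ 0 < T ∧
      ∀ t, T < t → C₁ * Real.exp (-β * t) ≤ φ t ∧ φ t ≤ C₂ * Real.exp (-β * t) := by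
  have hn3 : (3:ℝ) ≤ (n:ℝ) := by exact_mod_cast hn
  obtain ⟨m, hm⟩ : ∃ m : ℝ, m = (n:ℝ) - 1/2 := ⟨_, rfl⟩
  have hmβ : β < m := by rw [hm]; linarith
  have hnβ : β < (n:ℝ) := by linarith
  have hmβ0 : (0:ℝ) < m - β := by linarith
  have hnβ0 : (0:ℝ) < (n:ℝ) - β := by linarith
  -- find A beyond which K * φ ≤ 1/2
  have h2K : (0:ℝ) < 1/(2*K) := by positivity
  have hev : ∀ᶠ t in Filter.atTop, φ t < 1/(2*K) :=
    hφlim.eventually (gt_mem_nhds h2K)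
  obtain ⟨T₂, hT₂⟩ := Filter.eventually_atTop.1 hev
  obtain ⟨A, hA⟩ : ∃ A : ℝ, A = max 2 T₂ := ⟨_, rfl⟩
  have hA2 : (2:ℝ) ≤ A := hA ▸ le_max_left _ _
  have hAT₂ : T₂ ≤ A := hA ▸ le_max_right _ _
  have hA1 : (1:ℝ) < A := lt_of_lt_of_le one_lt_two hA2
  have hAt1 : ∀ t, A ≤ t → 1 < t := fun t ht => lt_of_lt_of_le hA1 ht
  have hφsmall : ∀ t, A ≤ t → K * φ t ≤ 1/2 := by
    intro t ht
    have h1 := hT₂ t (le_trans hAT₂ ht)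
    have h2 := hφnonneg t (hAt1 t ht)
    rw [lt_div_iff₀ (by positivity)] at h1
    nlinarith
  have hH₂half : ∀ t, A ≤ t → |H₂ t| ≤ (1/2) * φ t := by
    intro t ht
    have h1 := hH₂ t (hAt1 t ht)
    have h2 := hφsmall t ht
    have h3 := hφnonneg t (hAt1 t ht)
    nlinarith
  -- upper bound
  obtain ⟨q, hq⟩ : ∃ q : ℝ, q = c' / (m - β) := ⟨_, rfl⟩
  have hqpos : 0 < q := hq ▸ div_pos hc' hmβ0
  have hqc : q * (m - β) = c' := by
    rw [hq, div_mul_cancel₀ _ hmβ0.ne']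
  obtain ⟨ψ, hψ⟩ : ∃ ψ : ℝ → ℝ,
      ψ = fun s => Real.exp (m*s) * φ s - q * Real.exp ((m-β)*s) := ⟨_, rfl⟩
  have hψd : ∀ t ∈ Set.Ici A, HasDerivAt ψ
      (Real.exp (m*t) * (m * φ t + (-(n:ℝ) * φ t + H₁ t + H₂ t))
        - q * ((m-β) * Real.exp ((m-β)*t))) t := by
    intro t ht
    rw [hψ]
    exact stmt7_deriv m q β (hφderiv t (hAt1 t ht))
  have hψanti : AntitoneOn ψ (Set.Ici A) := by
    apply stmt7_antitone hψd
    intro t ht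
    have ht' : A ≤ t := le_of_lt ht
    have h1 : H₂ t ≤ (1/2) * φ t := le_trans (le_abs_self _) (hH₂half t ht')
    have h2 := hH₁u t (hAt1 t ht')
    have hsplit : Real.exp ((m-β)*t) = Real.exp (m*t) * Real.exp (-β*t) :=
      (stmt7_expmul (m*t) (-β*t) ((m-β)*t) (by ring)).symm
    have hbr : m * φ t + (-(n:ℝ) * φ t + H₁ t + H₂ t) - c' * Real.exp (-β*t) ≤ 0 := by
      rw [hm]; linarith
    have heq : Real.exp (m*t) * (m * φ t + (-(n:ℝ) * φ t + H₁ t + H₂ t))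
        - q * ((m-β) * Real.exp ((m-β)*t))
        = Real.exp (m*t) * (m * φ t + (-(n:ℝ) * φ t + H₁ t + H₂ t)
            - c' * Real.exp (-β*t)) := by
      rw [hsplit]
      linear_combination (-(Real.exp (m*t) * Real.exp (-β*t))) * hqc
    rw [heq]
    exact mul_nonpos_of_nonneg_of_nonpos (Real.exp_pos _).le hbr
  obtain ⟨M, hM⟩ : ∃ M : ℝ, M = max (ψ A) 0 := ⟨_, rfl⟩
  have hMnonneg : (0:ℝ) ≤ M := hM ▸ le_max_right _ _
  obtain ⟨C₂, hC₂⟩ : ∃ C₂ : ℝ, C₂ = M * Real.exp (-((m-β)*A)) + q := ⟨_, rfl⟩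
  have hC₂pos : 0 < C₂ := by
    rw [hC₂]
    have := Real.exp_pos (-((m-β)*A))
    nlinarith
  have hupper : ∀ t, A ≤ t → φ t ≤ C₂ * Real.exp (-β*t) := by
    intro t ht
    have h1 : ψ t ≤ ψ A := hψanti Set.self_mem_Ici ht ht
    have e1 : ψ t = Real.exp (m*t) * φ t - q * Real.exp ((m-β)*t) := by rw [hψ]
    have e2 : ψ A ≤ M := hM ▸ le_max_left _ _
    have h2 : Real.exp (m*t) * φ t ≤ M + q * Real.exp ((m-β)*t) := by
      rw [e1] at h1; linarith
    have e4 : Real.exp (-(m*t)) * Real.exp (m*t) = 1 :=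
      (stmt7_expmul (-(m*t)) (m*t) 0 (by ring)).trans Real.exp_zero
    have e3 : Real.exp (-(m*t)) * Real.exp ((m-β)*t) = Real.exp (-β*t) :=
      stmt7_expmul _ _ _ (by ring)
    have e5 : Real.exp (-(m*t)) = Real.exp (-((m-β)*t)) * Real.exp (-β*t) :=
      (stmt7_expmul (-((m-β)*t)) (-β*t) (-(m*t)) (by ring)).symm
    have step : φ t ≤ M * (Real.exp (-((m-β)*t)) * Real.exp (-β*t)) + q * Real.exp (-β*t) := by
      calc φ t = (Real.exp (-(m*t)) * Real.exp (m*t)) * φ t := by rw [e4]; ring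
        _ = Real.exp (-(m*t)) * (Real.exp (m*t) * φ t) := by ring
        _ ≤ Real.exp (-(m*t)) * (M + q * Real.exp ((m-β)*t)) :=
            mul_le_mul_of_nonneg_left h2 (Real.exp_pos _).le
        _ = M * Real.exp (-(m*t)) + q * (Real.exp (-(m*t)) * Real.exp ((m-β)*t)) := by ring
        _ = M * Real.exp (-(m*t)) + q * Real.exp (-β*t) := by rw [e3]
        _ = M * (Real.exp (-((m-β)*t)) * Real.exp (-β*t)) + q * Real.exp (-β*t) := by rw [e5]
    have hmono : Real.exp (-((m-β)*t)) ≤ Real.exp (-((m-β)*A)) := by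
      apply Real.exp_le_exp.2
      nlinarith [mul_nonneg hmβ0.le (sub_nonneg.2 ht)]
    have hstep2 : M * (Real.exp (-((m-β)*t)) * Real.exp (-β*t))
        ≤ M * Real.exp (-((m-β)*A)) * Real.exp (-β*t) := by
      calc M * (Real.exp (-((m-β)*t)) * Real.exp (-β*t))
          ≤ M * (Real.exp (-((m-β)*A)) * Real.exp (-β*t)) :=
            mul_le_mul_of_nonneg_left
              (mul_le_mul_of_nonneg_right hmono (Real.exp_pos (-β*t)).le) hMnonneg
        _ = M * Real.exp (-((m-β)*A)) * Real.exp (-β*t) := (mul_assoc _ _ _).symm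
    calc φ t ≤ M * (Real.exp (-((m-β)*t)) * Real.exp (-β*t)) + q * Real.exp (-β*t) := step
      _ ≤ M * Real.exp (-((m-β)*A)) * Real.exp (-β*t) + q * Real.exp (-β*t) := by linarith
      _ = C₂ * Real.exp (-β*t) := by rw [hC₂]; ring
  -- H₂ lower bound beyond B
  obtain ⟨B, hB⟩ : ∃ B : ℝ, B = max A (Real.log (2*K*C₂^2/c) / β) := ⟨_, rfl⟩
  have hAB : A ≤ B := hB ▸ le_max_left _ _
  have hBlog : Real.log (2*K*C₂^2/c) / β ≤ B := hB ▸ le_max_right _ _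
  have hBt1 : ∀ t, B ≤ t → 1 < t := fun t ht => hAt1 t (le_trans hAB ht)
  have hKb : ∀ t, B ≤ t → K * (φ t)^2 ≤ (c/2) * Real.exp (-β*t) := by
    intro t ht
    have h2 := hupper t (le_trans hAB ht)
    have h3 := hφnonneg t (hBt1 t ht)
    have hexp : 2*K*C₂^2/c ≤ Real.exp (β*t) := by
      calc 2*K*C₂^2/c = Real.exp (Real.log (2*K*C₂^2/c)) := by
            rw [Real.exp_log (by positivity)]
        _ ≤ Real.exp (β*t) := by
            apply Real.exp_le_exp.2
            have hlB : Real.log (2*K*C₂^2/c) / β ≤ t := le_trans hBlog ht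
            rw [div_le_iff₀ hβ0] at hlB; linarith
    have hinv : Real.exp (-β*t) * Real.exp (β*t) = 1 :=
      (stmt7_expmul (-β*t) (β*t) 0 (by ring)).trans Real.exp_zero
    have h7 : 2*K*C₂^2 ≤ Real.exp (β*t) * c := (div_le_iff₀ hc).1 hexp
    have h6 : K * C₂^2 * Real.exp (-β*t) ≤ c/2 := by
      have h7' := mul_le_mul_of_nonneg_right h7 (Real.exp_pos (-β*t)).le
      have heq : Real.exp (β*t) * c * Real.exp (-β*t) = c := by
        linear_combination c * hinv
      linarith [h7', heq.le, heq.ge]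
    have hsq : (φ t)^2 ≤ (C₂ * Real.exp (-β*t))^2 := pow_le_pow_left₀ h3 h2 2
    have hA1' : K * (φ t)^2 ≤ K * (C₂ * Real.exp (-β*t))^2 :=
      mul_le_mul_of_nonneg_left hsq hK.le
    have hB1 : K * C₂^2 * Real.exp (-β*t) * Real.exp (-β*t) ≤ c/2 * Real.exp (-β*t) :=
      mul_le_mul_of_nonneg_right h6 (Real.exp_pos _).le
    have heq2 : K * (C₂ * Real.exp (-β*t))^2
        = K * C₂^2 * Real.exp (-β*t) * Real.exp (-β*t) := by ring
    linarith [hA1', hB1, heq2.le, heq2.ge]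
  have hH₂low : ∀ t, B ≤ t → -((c/2) * Real.exp (-β*t)) ≤ H₂ t := by
    intro t ht
    have h1 := (abs_le.1 (hH₂ t (hBt1 t ht))).1
    have := hKb t ht
    linarith
  -- lower bound
  obtain ⟨a', ha'⟩ : ∃ a' : ℝ, a' = (c/2) / ((n:ℝ) - β) := ⟨_, rfl⟩
  have ha'pos : 0 < a' := ha' ▸ div_pos (by linarith) hnβ0
  have ha'c : a' * ((n:ℝ) - β) = c/2 := by
    rw [ha', div_mul_cancel₀ _ hnβ0.ne']
  obtain ⟨χ, hχ⟩ : ∃ χ : ℝ → ℝ,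
      χ = fun s => Real.exp ((n:ℝ)*s) * φ s - a' * Real.exp (((n:ℝ)-β)*s) := ⟨_, rfl⟩
  have hχd : ∀ t ∈ Set.Ici B, HasDerivAt χ
      (Real.exp ((n:ℝ)*t) * ((n:ℝ) * φ t + (-(n:ℝ) * φ t + H₁ t + H₂ t))
        - a' * (((n:ℝ)-β) * Real.exp (((n:ℝ)-β)*t))) t := by
    intro t ht
    rw [hχ]
    exact stmt7_deriv (n:ℝ) a' β (hφderiv t (hBt1 t ht))
  have hχmono : MonotoneOn χ (Set.Ici B) := by
    apply stmt7_monotone hχd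
    intro t ht
    have ht' : B ≤ t := le_of_lt ht
    have h1 := hH₂low t ht'
    have h2 := hH₁l t (hBt1 t ht')
    have hsplit : Real.exp (((n:ℝ)-β)*t) = Real.exp ((n:ℝ)*t) * Real.exp (-β*t) :=
      (stmt7_expmul ((n:ℝ)*t) (-β*t) (((n:ℝ)-β)*t) (by ring)).symm
    have hbr : 0 ≤ (n:ℝ) * φ t + (-(n:ℝ) * φ t + H₁ t + H₂ t) - (c/2) * Real.exp (-β*t) := by
      linarith
    have heq : Real.exp ((n:ℝ)*t) * ((n:ℝ) * φ t + (-(n:ℝ) * φ t + H₁ t + H₂ t))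
        - a' * (((n:ℝ)-β) * Real.exp (((n:ℝ)-β)*t))
        = Real.exp ((n:ℝ)*t) * ((n:ℝ) * φ t + (-(n:ℝ) * φ t + H₁ t + H₂ t)
            - (c/2) * Real.exp (-β*t)) := by
      rw [hsplit]
      linear_combination (-(Real.exp ((n:ℝ)*t) * Real.exp (-β*t))) * ha'c
    rw [heq]
    exact mul_nonneg (Real.exp_pos _).le hbr
  obtain ⟨D, hD⟩ : ∃ D : ℝ, D = max (-(χ B)) 0 := ⟨_, rfl⟩
  have hDnonneg : (0:ℝ) ≤ D := hD ▸ le_max_right _ _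
  have hDχ : -D ≤ χ B := by
    have : -(χ B) ≤ D := hD ▸ le_max_left _ _
    linarith
  obtain ⟨T, hT⟩ : ∃ T : ℝ, T = max B (Real.log (2*(D+1)/a') / ((n:ℝ)-β)) := ⟨_, rfl⟩
  have hBT : B ≤ T := hT ▸ le_max_left _ _
  have hTlog : Real.log (2*(D+1)/a') / ((n:ℝ)-β) ≤ T := hT ▸ le_max_right _ _
  have hTpos : 0 < T := by
    have : (2:ℝ) ≤ T := le_trans (le_trans hA2 hAB) hBT
    linarith
  refine ⟨a'/2, C₂, T, by linarith, hC₂pos, hTpos, ?_⟩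
  intro t htT
  have htB : B ≤ t := le_trans hBT htT.le
  constructor
  · -- lower bound
    have h1 : χ B ≤ χ t := hχmono Set.self_mem_Ici htB htB
    have e1 : χ t = Real.exp ((n:ℝ)*t) * φ t - a' * Real.exp (((n:ℝ)-β)*t) := by rw [hχ]
    have h2 : -D + a' * Real.exp (((n:ℝ)-β)*t) ≤ Real.exp ((n:ℝ)*t) * φ t := by
      rw [e1] at h1; linarith
    have e4 : Real.exp (-((n:ℝ)*t)) * Real.exp ((n:ℝ)*t) = 1 :=
      (stmt7_expmul (-((n:ℝ)*t)) ((n:ℝ)*t) 0 (by ring)).trans Real.exp_zero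
    have e3 : Real.exp (-((n:ℝ)*t)) * Real.exp (((n:ℝ)-β)*t) = Real.exp (-β*t) :=
      stmt7_expmul _ _ _ (by ring)
    have e5 : Real.exp (-((n:ℝ)*t)) = Real.exp (-(((n:ℝ)-β)*t)) * Real.exp (-β*t) :=
      (stmt7_expmul (-(((n:ℝ)-β)*t)) (-β*t) (-((n:ℝ)*t)) (by ring)).symm
    have step : -(D * (Real.exp (-(((n:ℝ)-β)*t)) * Real.exp (-β*t))) + a' * Real.exp (-β*t)
        ≤ φ t := by
      calc -(D * (Real.exp (-(((n:ℝ)-β)*t)) * Real.exp (-β*t))) + a' * Real.exp (-β*t)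
          = -(D * Real.exp (-((n:ℝ)*t))) + a' * (Real.exp (-((n:ℝ)*t)) * Real.exp (((n:ℝ)-β)*t)) := by
            rw [e3, e5]
        _ = Real.exp (-((n:ℝ)*t)) * (-D + a' * Real.exp (((n:ℝ)-β)*t)) := by ring
        _ ≤ Real.exp (-((n:ℝ)*t)) * (Real.exp ((n:ℝ)*t) * φ t) :=
            mul_le_mul_of_nonneg_left h2 (Real.exp_pos _).le
        _ = (Real.exp (-((n:ℝ)*t)) * Real.exp ((n:ℝ)*t)) * φ t := by ring
        _ = φ t := by rw [e4]; ring
    have hexp : 2*(D+1)/a' ≤ Real.exp (((n:ℝ)-β)*t) := by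
      calc 2*(D+1)/a' = Real.exp (Real.log (2*(D+1)/a')) := by
            rw [Real.exp_log (by positivity)]
        _ ≤ Real.exp (((n:ℝ)-β)*t) := by
            apply Real.exp_le_exp.2
            have hl := le_trans hTlog htT.le
            rw [div_le_iff₀ hnβ0] at hl; linarith
    have hinv : Real.exp (-(((n:ℝ)-β)*t)) * Real.exp (((n:ℝ)-β)*t) = 1 :=
      (stmt7_expmul _ _ 0 (by ring)).trans Real.exp_zero
    have h7 : 2*(D+1) ≤ Real.exp (((n:ℝ)-β)*t) * a' := (div_le_iff₀ ha'pos).1 hexp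
    have h8 : D * Real.exp (-(((n:ℝ)-β)*t)) ≤ a'/2 := by
      have h7' := mul_le_mul_of_nonneg_right h7 (Real.exp_pos (-(((n:ℝ)-β)*t))).le
      have heq : Real.exp (((n:ℝ)-β)*t) * a' * Real.exp (-(((n:ℝ)-β)*t)) = a' := by
        linear_combination a' * hinv
      have hEpos := Real.exp_pos (-(((n:ℝ)-β)*t))
      linarith [h7', heq.le, heq.ge, hEpos]
    have h9 : D * (Real.exp (-(((n:ℝ)-β)*t)) * Real.exp (-β*t)) ≤ a'/2 * Real.exp (-β*t) := by
      have := mul_le_mul_of_nonneg_right h8 (Real.exp_pos (-β*t)).le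
      calc D * (Real.exp (-(((n:ℝ)-β)*t)) * Real.exp (-β*t))
          = D * Real.exp (-(((n:ℝ)-β)*t)) * Real.exp (-β*t) := (mul_assoc _ _ _).symm
        _ ≤ a'/2 * Real.exp (-β*t) := this
    calc a'/2 * Real.exp (-β*t)
        = a' * Real.exp (-β*t) - a'/2 * Real.exp (-β*t) := by ring
      _ ≤ a' * Real.exp (-β*t) - D * (Real.exp (-(((n:ℝ)-β)*t)) * Real.exp (-β*t)) := by
          linarith
      _ ≤ φ t := by linarith
  · exact hupper t (le_trans hAB htB)
end

section
/- For p > 0 and t ≥ 0, the ratio (√(1+p²) + t)²/(1 + (p+t)²) satisfies 1 ≤ (√(1+p²)+t)²/(1+(p+t)²) ≤ 1 + 2t/((1+p²)·(√(1+p²)+p)). -/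
theorem stmt_11 (p t : ℝ) (hp : 0 < p) (ht : 0 ≤ t) :
    1 ≤ (Real.sqrt (1 + p ^ 2) + t) ^ 2 / (1 + (p + t) ^ 2) ∧
      (Real.sqrt (1 + p ^ 2) + t) ^ 2 / (1 + (p + t) ^ 2)
        ≤ 1 + 2 * t / ((1 + p ^ 2) * (Real.sqrt (1 + p ^ 2) + p)) := by
  set s := Real.sqrt (1 + p ^ 2) with hs
  have hs2 : s ^ 2 = 1 + p ^ 2 := Real.sq_sqrt (by positivity)
  have hsp : p ≤ s := by
    nlinarith [Real.sqrt_nonneg (1 + p ^ 2)]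
  have hspos : 0 < s := lt_of_lt_of_le hp hsp
  have hb : 0 < 1 + (p + t) ^ 2 := by positivity
  have hD : 0 < (1 + p ^ 2) * (s + p) := by positivity
  constructor
  · rw [le_div_iff₀ hb]
    nlinarith
  · rw [div_le_iff₀ hb, add_mul, div_mul_eq_mul_div, ← sub_le_iff_le_add', le_div_iff₀ hD]
    have e2 : ((s + t) ^ 2 - 1 * (1 + (p + t) ^ 2)) * ((1 + p ^ 2) * (s + p))
        = 2 * t * (1 + p ^ 2) := by
      linear_combination ((1 + p ^ 2) * (s + p) + 2 * t * (1 + p ^ 2)) * hs2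
    rw [e2]
    nlinarith [mul_nonneg ht (by positivity : (0:ℝ) ≤ 2 * p * t + t ^ 2)]
end
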